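/- For h ∈ ℝ define M_h^* f(x) = sup_{t>0} ∫_{I(h,2)} |f(x−ty)| dy, where I(h,2) = {y ∈ ℝ : |y−h| < 2}. Then for every 1 < p ≤ ∞ there is a constant C, independent of h, such that ‖M_h^* f‖_{L^p(ℝ)} ≤ C (1+|h|)^{1/p} ‖f‖_{L^p(ℝ)} for all f ∈ L^p(ℝ) (with the convention (1+|h|)^{1/∞} = 1). -/

import Mathlib

/-!
Substituting `u = x - t y` turns `M_h^* f (x)` into `sup_{t>0} t⁻¹ ∫_{B(x-th, 2t)} |f|`. The ball
`B(x-th, 2t)` need not contain `x`, but `B(x-th, (2+|h|)t)` does, so the Vitali covering lemma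
applied to these enlarged balls gives the weak type (1,1) bound with constant `O(1+|h|)`, while
trivially `M_h^* f ≤ 4 ‖f‖_∞`. Marcinkiewicz's argument (split `f` at height `t/8` and integrate
the distribution function against `p t^{p-1} dt`) interpolates these to the `L^p` bound with
constant `O((1+|h|)^{1/p})`.
-/

open MeasureTheory Metric Set
open scoped ENNReal NNReal

noncomputable section

/-- `L^r` quasi-norm (in `ℝ≥0∞`) of an `ℝ≥0∞`-valued function. -/
def lpNormE {α : Type*} [MeasurableSpace α] (μ : Measure α) (F : α → ℝ≥0∞) (r : ℝ≥0∞) : ℝ≥0∞ :=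
  if r = 0 then 0 else if r = ∞ then essSup F μ
  else (∫⁻ x, F x ^ r.toReal ∂μ) ^ (1 / r.toReal)

/-- The maximal operator `M_h^* f(x) = sup_{t>0} ∫_{I(h,2)} |f(x - ty)| dy`,
where `I(h,2) = {y : |y - h| < 2}`. -/
def MhStar (h : ℝ) (f : ℝ → ℝ) (x : ℝ) : ℝ≥0∞ :=
  ⨆ t ∈ Ioi (0 : ℝ), ∫⁻ y in ball h 2, ENNReal.ofReal |f (x - t * y)|

section LayerCake

variable {α β : Type*} [MeasurableSpace α] [MeasurableSpace β]

lemma setLIntegral_Ioo_ofReal_mul_rpow_sub_one {q a : ℝ} (hq : 0 < q) (ha : 0 ≤ a) :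
    ∫⁻ t in Ioo 0 a, ENNReal.ofReal (q * t ^ (q - 1)) = ENNReal.ofReal (a ^ q) := by
  have hint : IntegrableOn (fun t : ℝ => q * t ^ (q - 1)) (Ioc 0 a) :=
    (intervalIntegrable_iff_integrableOn_Ioc_of_le ha).1
      ((intervalIntegral.intervalIntegrable_rpow' (by linarith)).const_mul q)
  rw [← ofReal_integral_eq_lintegral_ofReal (hint.mono_set Ioo_subset_Ioc_self),
    ← integral_Ioc_eq_integral_Ioo, ← intervalIntegral.integral_of_le ha,
    intervalIntegral.integral_const_mul, integral_rpow (Or.inl (by linarith)),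
    sub_add_cancel, Real.zero_rpow hq.ne', sub_zero, mul_div_cancel₀ _ hq.ne']
  filter_upwards [ae_restrict_mem measurableSet_Ioo] with t ht
  exact mul_nonneg hq.le (Real.rpow_nonneg ht.1.le _)

lemma setLIntegral_Ioi_ofReal_mul_rpow_sub_one {q : ℝ} (hq : 0 < q) :
    ∫⁻ t in Ioi 0, ENNReal.ofReal (q * t ^ (q - 1)) = ∞ := by
  have hnonneg : 0 ≤ᵐ[volume.restrict (Ioi 0)] fun t : ℝ => t ^ (q - 1) := by
    filter_upwards [ae_restrict_mem measurableSet_Ioi] with t ht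
    exact Real.rpow_nonneg (le_of_lt ht) _
  have hinf : ∫⁻ t in Ioi 0, ENNReal.ofReal (t ^ (q - 1)) = ∞ := by
    by_contra hfin
    refine not_integrableOn_Ioi_rpow (q - 1) ⟨by fun_prop, ?_⟩
    exact (hasFiniteIntegral_iff_ofReal hnonneg).2 (lt_top_iff_ne_top.2 hfin)
  simp_rw [ENNReal.ofReal_mul hq.le]
  rw [lintegral_const_mul' _ _ ENNReal.ofReal_ne_top, hinf,
    ENNReal.mul_top (ENNReal.ofReal_pos.2 hq).ne']

lemma rpow_eq_setLIntegral_indicator_ofReal_lt (c : ℝ≥0∞) {q : ℝ} (hq : 0 < q) :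
    c ^ q = ∫⁻ t in Ioi 0,
      {t | ENNReal.ofReal t < c}.indicator (fun t => ENNReal.ofReal (q * t ^ (q - 1))) t := by
  rw [lintegral_indicator (measurableSet_lt (by fun_prop) measurable_const),
    Measure.restrict_restrict (measurableSet_lt (by fun_prop) measurable_const)]
  rcases eq_or_ne c ∞ with rfl | hc
  · simp only [ENNReal.ofReal_lt_top, ofPred_true, univ_inter]
    rw [setLIntegral_Ioi_ofReal_mul_rpow_sub_one hq, ENNReal.top_rpow_of_pos hq]
  · have hset : {t : ℝ | ENNReal.ofReal t < c} ∩ Ioi 0 = Ioo 0 c.toReal := by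
      ext t
      simp only [mem_inter_iff, mem_ofPred_eq, mem_Ioi, mem_Ioo]
      exact ⟨fun h => ⟨h.2, (ENNReal.ofReal_lt_iff_lt_toReal h.2.le hc).1 h.1⟩,
        fun h => ⟨(ENNReal.ofReal_lt_iff_lt_toReal h.1.le hc).2 h.2, h.1⟩⟩
    rw [hset, setLIntegral_Ioo_ofReal_mul_rpow_sub_one hq ENNReal.toReal_nonneg,
      ← ENNReal.ofReal_rpow_of_nonneg ENNReal.toReal_nonneg hq.le, ENNReal.ofReal_toReal hc]

theorem lintegral_rpow_eq_lintegral_ofReal_mul_meas_lt (μ : Measure α) [SFinite μ]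
    {F : α → ℝ≥0∞} (hF : Measurable F) {q : ℝ} (hq : 0 < q) :
    ∫⁻ x, F x ^ q ∂μ =
      ∫⁻ t in Ioi 0, ENNReal.ofReal (q * t ^ (q - 1)) * μ {x | ENNReal.ofReal t < F x} := by
  have hS : MeasurableSet {p : α × ℝ | ENNReal.ofReal p.2 < F p.1} :=
    measurableSet_lt (by fun_prop) (by fun_prop)
  simp_rw [rpow_eq_setLIntegral_indicator_ofReal_lt _ hq]
  rw [lintegral_lintegral_swap (by exact (Measurable.indicator (by fun_prop) hS).aemeasurable)]
  refine setLIntegral_congr_fun measurableSet_Ioi fun t _ => ?_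
  rw [← lintegral_indicator_const (measurableSet_lt measurable_const hF)]
  rfl

lemma ofReal_abs_mul_rpow_sub_one {P a : ℝ} (hP : 0 < P) (ha : 0 ≤ a) (y : ℝ) :
    ENNReal.ofReal |y| * ENNReal.ofReal ((a * |y|) ^ (P - 1)) =
      ENNReal.ofReal (a ^ (P - 1)) * ENNReal.ofReal |y| ^ P := by
  have hpow : |y| ^ P = |y| ^ (P - 1) * |y| := by
    rw [← Real.rpow_add_one' (abs_nonneg _) (by linarith), sub_add_cancel]
  rw [ENNReal.ofReal_rpow_of_nonneg (abs_nonneg _) hP.le, ← ENNReal.ofReal_mul (abs_nonneg _),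
    ← ENNReal.ofReal_mul (by positivity), Real.mul_rpow ha (abs_nonneg _), hpow]
  congr 1
  ring

theorem lintegral_rpow_le_of_mul_meas_lt_le (μ : Measure α) [SFinite μ] (ν : Measure β)
    {F : α → ℝ≥0∞} (hF : Measurable F) {f : β → ℝ} (hf : Measurable f) {P a : ℝ} (hP : 1 < P)
    (ha : 0 ≤ a) {K : ℝ≥0∞} (hK : K ≠ ∞)
    (hdist : ∀ t > 0, ENNReal.ofReal t * μ {x | ENNReal.ofReal t < F x} ≤
      K * ∫⁻ u in {u | t < a * |f u|}, ENNReal.ofReal |f u| ∂ν) :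
    ∫⁻ x, F x ^ P ∂μ ≤
      ENNReal.ofReal (P / (P - 1) * a ^ (P - 1)) * K * ∫⁻ u, ENNReal.ofReal |f u| ^ P ∂ν := by
  set ρ := ν.withDensity fun u => ENNReal.ofReal |f u|
  have hS : ∀ t : ℝ, MeasurableSet {u | t < a * |f u|} := fun t =>
    measurableSet_lt measurable_const (by fun_prop)
  -- The remaining `t`-integral is the layer cake formula for `a |f|` with respect to `|f| dν`.
  have hρ := lintegral_rpow_eq_lintegral_meas_lt_mul ρ (f := fun u => a * |f u|)
    (ae_of_all _ fun u => by positivity) (by fun_prop) (sub_pos.2 hP)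
  have hpointwise : ∀ t > (0 : ℝ), ENNReal.ofReal (P * t ^ (P - 1)) *
      μ {x | ENNReal.ofReal t < F x} ≤
        ENNReal.ofReal P * K * (ρ {u | t < a * |f u|} * ENNReal.ofReal (t ^ (P - 1 - 1))) := by
    intro t ht
    have hsplit : t ^ (P - 1) = t ^ (P - 1 - 1) * t := by
      rw [← Real.rpow_add_one ht.ne', sub_add_cancel]
    calc ENNReal.ofReal (P * t ^ (P - 1)) * μ {x | ENNReal.ofReal t < F x}
        = ENNReal.ofReal P * ENNReal.ofReal (t ^ (P - 1 - 1)) *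
            (ENNReal.ofReal t * μ {x | ENNReal.ofReal t < F x}) := by
          rw [hsplit, ENNReal.ofReal_mul (by linarith), ENNReal.ofReal_mul (by positivity)]
          ring
      _ ≤ ENNReal.ofReal P * ENNReal.ofReal (t ^ (P - 1 - 1)) *
            (K * ρ {u | t < a * |f u|}) := by
          rw [withDensity_apply _ (hS t)]
          exact mul_le_mul_right (hdist t ht) _
      _ = _ := by ring
  calc ∫⁻ x, F x ^ P ∂μ
      = ∫⁻ t in Ioi 0, ENNReal.ofReal (P * t ^ (P - 1)) * μ {x | ENNReal.ofReal t < F x} :=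
        lintegral_rpow_eq_lintegral_ofReal_mul_meas_lt μ hF (by linarith)
    _ ≤ ∫⁻ t in Ioi 0,
          ENNReal.ofReal P * K * (ρ {u | t < a * |f u|} * ENNReal.ofReal (t ^ (P - 1 - 1))) :=
        setLIntegral_mono' measurableSet_Ioi hpointwise
    _ = ENNReal.ofReal P * K / ENNReal.ofReal (P - 1) *
          ∫⁻ u, ENNReal.ofReal ((a * |f u|) ^ (P - 1)) ∂ρ := by
        rw [lintegral_const_mul' _ _ (ENNReal.mul_ne_top ENNReal.ofReal_ne_top hK), hρ,
          ← mul_assoc, ENNReal.div_mul_cancel (by simpa using hP) ENNReal.ofReal_ne_top]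
    _ = ENNReal.ofReal (P / (P - 1) * a ^ (P - 1)) * K *
          ∫⁻ u, ENNReal.ofReal |f u| ^ P ∂ν := by
        rw [lintegral_withDensity_eq_lintegral_mul _ (by fun_prop) (by fun_prop)]
        simp only [Pi.mul_apply, ofReal_abs_mul_rpow_sub_one (zero_lt_one.trans hP) ha]
        rw [lintegral_const_mul' _ _ ENNReal.ofReal_ne_top, ENNReal.ofReal_mul (by positivity),
          ENNReal.ofReal_div_of_pos (by linarith), div_eq_mul_inv, div_eq_mul_inv]
        ring

end LayerCake

lemma lowerSemicontinuous_measure_ball {α : Type*} [PseudoMetricSpace α] [MeasurableSpace α]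
    (ν : Measure α) (r : ℝ) : LowerSemicontinuous fun x => ν (ball x r) := by
  intro x y hy
  dsimp only at hy ⊢
  have hunion : ball x r = ⋃ n : ℕ, ball x (r - 1 / (n + 1)) := by
    ext u
    simp only [mem_iUnion, mem_ball]
    refine ⟨fun hu => ?_, fun ⟨n, hn⟩ => ?_⟩
    · obtain ⟨n, hn⟩ := exists_nat_one_div_lt (sub_pos.2 hu)
      exact ⟨n, by linarith⟩
    · linarith [Nat.one_div_pos_of_nat (α := ℝ) (n := n)]
  have hmono : Monotone fun n : ℕ => ball x (r - 1 / (n + 1)) := fun m n hmn =>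
    ball_subset_ball (by linarith [Nat.one_div_le_one_div (α := ℝ) hmn])
  rw [hunion, hmono.measure_iUnion] at hy
  obtain ⟨n, hn⟩ := lt_iSup_iff.1 hy
  filter_upwards [ball_mem_nhds x (Nat.one_div_pos_of_nat (α := ℝ) (n := n))] with x' hx'
  refine hn.trans_le (measure_mono (ball_subset_ball' ?_))
  rw [dist_comm]
  linarith [mem_ball.1 hx']

lemma map_volume_sub_mul (x : ℝ) {t : ℝ} (ht : 0 < t) :
    Measure.map (fun y : ℝ => x - t * y) volume = ENNReal.ofReal t⁻¹ • volume := by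
  have hcomp : (fun y : ℝ => x - t * y) = (fun z : ℝ => x + z) ∘ (fun y : ℝ => -t * y) := by
    ext y
    simp only [Function.comp_apply]
    ring
  rw [hcomp, ← Measure.map_map (by fun_prop) (by fun_prop),
    Real.map_volume_mul_left (neg_ne_zero.2 ht.ne'), Measure.map_smul, map_add_left_eq_self,
    abs_inv, abs_neg, abs_of_pos ht]

lemma setLIntegral_ball_comp_sub_mul (g : ℝ → ℝ≥0∞) (x : ℝ) {t : ℝ} (ht : 0 < t) (c r : ℝ) :
    ∫⁻ y in ball c r, g (x - t * y) =
      ENNReal.ofReal t⁻¹ * ∫⁻ u in ball (x - t * c) (t * r), g u := by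
  have hemb : MeasurableEmbedding fun y : ℝ => x - t * y :=
    ((Homeomorph.mulLeft₀ t ht.ne').trans (Homeomorph.subLeft x)).measurableEmbedding
  have hpre : (fun y : ℝ => x - t * y) ⁻¹' ball (x - t * c) (t * r) = ball c r := by
    ext y
    have hdist : |x - t * y - (x - t * c)| = t * |y - c| := by
      rw [show x - t * y - (x - t * c) = t * (c - y) by ring, abs_mul, abs_of_pos ht,
        abs_sub_comm]
    simp only [mem_preimage, mem_ball, Real.dist_eq, hdist, mul_lt_mul_iff_right₀ ht]
  rw [← hpre, (MeasurePreserving.mk hemb.measurable (map_volume_sub_mul x ht))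
    |>.setLIntegral_comp_preimage_emb hemb, Measure.restrict_smul, lintegral_smul_measure,
    smul_eq_mul]

theorem mul_volume_le_of_le_measure_ball (ν : Measure ℝ) {E : Set ℝ} {c r : ℝ → ℝ} {κ : ℝ≥0∞}
    (hmem : ∀ x ∈ E, x ∈ ball (c x) (r x))
    (hκ : ∀ x ∈ E, κ * ENNReal.ofReal (r x) ≤ ν (ball (c x) (r x))) :
    κ * volume E ≤ 8 * ν univ := by
  rcases eq_or_ne κ 0 with rfl | hκ0
  · simp
  rcases eq_or_ne (ν univ) ∞ with hν | hν
  · simp [hν]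
  have hR : ∀ x ∈ E, r x ≤ (ν univ / κ).toReal := by
    intro x hx
    refine (ENNReal.ofReal_le_iff_le_toReal (ENNReal.div_ne_top hν hκ0)).1 ?_
    rw [ENNReal.le_div_iff_mul_le (Or.inl hκ0) (Or.inr hν), mul_comm]
    exact (hκ x hx).trans (measure_mono (subset_univ _))
  obtain ⟨u, huE, hdisj, hcover⟩ :=
    Vitali.exists_disjoint_subfamily_covering_enlargement_ball E c r _ hR 4 (by norm_num)
  have hu : u.Countable :=
    hdisj.countable_of_isOpen (fun _ _ => isOpen_ball) fun a ha => ⟨a, hmem a (huE ha)⟩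
  have hEsub : E ⊆ ⋃ b ∈ u, ball (c b) (4 * r b) := fun x hx => by
    obtain ⟨b, hb, hsub⟩ := hcover x hx
    exact mem_biUnion hb (hsub (hmem x hx))
  calc κ * volume E
      ≤ κ * ∑' b : u, volume (ball (c b) (4 * r b)) := by
        gcongr
        exact (measure_mono hEsub).trans (measure_biUnion_le _ hu _)
    _ = ∑' b : u, 8 * (κ * ENNReal.ofReal (r b)) := by
        rw [← ENNReal.tsum_mul_left]
        refine tsum_congr fun b => ?_
        rw [Real.volume_ball, show 2 * (4 * r b) = 8 * r b by ring,
          ENNReal.ofReal_mul (by norm_num), ENNReal.ofReal_ofNat]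
        ring
    _ ≤ ∑' b : u, 8 * ν (ball (c b) (r b)) :=
        ENNReal.tsum_le_tsum fun b => mul_le_mul_right (hκ b (huE b.2)) _
    _ = 8 * ν (⋃ b ∈ u, ball (c b) (r b)) := by
        rw [ENNReal.tsum_mul_left, measure_biUnion hu hdisj fun _ _ => measurableSet_ball]
    _ ≤ 8 * ν univ := by
        gcongr
        exact subset_univ _

lemma MhStar_eq_iSup_withDensity (h : ℝ) (f : ℝ → ℝ) (x : ℝ) :
    MhStar h f x = ⨆ t ∈ Ioi (0 : ℝ), ENNReal.ofReal t⁻¹ *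
      volume.withDensity (fun u => ENNReal.ofReal |f u|) (ball (x - t * h) (2 * t)) := by
  refine iSup_congr fun t => iSup_congr fun (ht : 0 < t) => ?_
  rw [setLIntegral_ball_comp_sub_mul (fun u => ENNReal.ofReal |f u|) x ht,
    withDensity_apply _ measurableSet_ball, mul_comm t 2]

lemma measurable_MhStar (h : ℝ) (f : ℝ → ℝ) : Measurable (MhStar h f) := by
  rw [funext (MhStar_eq_iSup_withDensity h f)]
  refine LowerSemicontinuous.measurable
    (lowerSemicontinuous_iSup fun t => lowerSemicontinuous_iSup fun _ => ?_)
  exact (ENNReal.continuous_const_mul ENNReal.ofReal_ne_top).comp_lowerSemicontinuous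
    ((lowerSemicontinuous_measure_ball _ _).comp (by fun_prop))
    fun _ _ hab => mul_le_mul_right hab _

lemma MhStar_congr_ae {f g : ℝ → ℝ} (hfg : f =ᵐ[volume] g) (h : ℝ) :
    MhStar h f = MhStar h g := by
  have hdens : (fun u => ENNReal.ofReal |f u|) =ᵐ[volume] fun u => ENNReal.ofReal |g u| :=
    hfg.fun_comp fun v => ENNReal.ofReal |v|
  funext x
  rw [MhStar_eq_iSup_withDensity, MhStar_eq_iSup_withDensity, withDensity_congr_ae hdens]

lemma MhStar_le_add {h : ℝ} {f g b : ℝ → ℝ} (hg : Measurable g)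
    (hfgb : ∀ u, |f u| ≤ |g u| + |b u|) (x : ℝ) :
    MhStar h f x ≤ MhStar h g x + MhStar h b x := by
  refine iSup₂_le fun t ht => ?_
  calc ∫⁻ y in ball h 2, ENNReal.ofReal |f (x - t * y)|
      ≤ ∫⁻ y in ball h 2, ENNReal.ofReal |g (x - t * y)| + ENNReal.ofReal |b (x - t * y)| :=
        lintegral_mono fun y => by
          rw [← ENNReal.ofReal_add (abs_nonneg _) (abs_nonneg _)]
          exact ENNReal.ofReal_le_ofReal (hfgb _)
    _ = (∫⁻ y in ball h 2, ENNReal.ofReal |g (x - t * y)|) +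
          ∫⁻ y in ball h 2, ENNReal.ofReal |b (x - t * y)| :=
        lintegral_add_left (by fun_prop) _
    _ ≤ MhStar h g x + MhStar h b x :=
        add_le_add (le_iSup₂_of_le t ht le_rfl) (le_iSup₂_of_le t ht le_rfl)

lemma MhStar_le_eLpNorm_top (h : ℝ) (f : ℝ → ℝ) (x : ℝ) :
    MhStar h f x ≤ 4 * eLpNorm f ∞ volume := by
  have hbound : ∀ᵐ u ∂volume, ENNReal.ofReal |f u| ≤ eLpNorm f ∞ volume := by
    simpa only [eLpNorm_exponent_top, Real.enorm_eq_ofReal_abs]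
      using ae_le_eLpNormEssSup (f := f) (μ := volume)
  rw [MhStar_eq_iSup_withDensity]
  refine iSup₂_le fun t (ht : 0 < t) => ?_
  rw [withDensity_apply _ measurableSet_ball]
  calc ENNReal.ofReal t⁻¹ * ∫⁻ u in ball (x - t * h) (2 * t), ENNReal.ofReal |f u|
      ≤ ENNReal.ofReal t⁻¹ * ∫⁻ _ in ball (x - t * h) (2 * t), eLpNorm f ∞ volume := by
        exact mul_le_mul_right (lintegral_mono_ae (ae_restrict_of_ae hbound)) _
    _ = 4 * eLpNorm f ∞ volume * (ENNReal.ofReal t⁻¹ * ENNReal.ofReal t) := by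
        rw [setLIntegral_const, Real.volume_ball, show 2 * (2 * t) = 4 * t by ring,
          ENNReal.ofReal_mul (by norm_num), ENNReal.ofReal_ofNat]
        ring
    _ = 4 * eLpNorm f ∞ volume := by
        rw [← ENNReal.ofReal_mul (inv_nonneg.2 ht.le), inv_mul_cancel₀ ht.ne', ENNReal.ofReal_one,
          mul_one]

theorem mul_volume_lt_MhStar_le (h : ℝ) (f : ℝ → ℝ) (L : ℝ≥0∞) :
    L * volume {x | L < MhStar h f x} ≤
      8 * ENNReal.ofReal (2 + |h|) * ∫⁻ u, ENNReal.ofReal |f u| := by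
  set ρ := volume.withDensity fun u => ENNReal.ofReal |f u|
  set E := {x | L < MhStar h f x}
  have hscale : ∀ x, ∃ t : ℝ, x ∈ E →
      0 < t ∧ L * ENNReal.ofReal t ≤ ρ (ball (x - t * h) (2 * t)) := by
    intro x
    by_cases hx : x ∈ E
    · have hlt : L < MhStar h f x := hx
      rw [MhStar_eq_iSup_withDensity] at hlt
      obtain ⟨t, ht, hlt⟩ := lt_biSup_iff.1 hlt
      refine ⟨t, fun _ => ⟨ht, ?_⟩⟩
      calc L * ENNReal.ofReal t
          ≤ ENNReal.ofReal t⁻¹ * ρ (ball (x - t * h) (2 * t)) * ENNReal.ofReal t := by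
            gcongr
      _ = ρ (ball (x - t * h) (2 * t)) := by
            rw [mul_right_comm, ← ENNReal.ofReal_mul (inv_nonneg.2 ht.le),
              inv_mul_cancel₀ ht.ne', ENNReal.ofReal_one, one_mul]
    · exact ⟨1, fun hx' => absurd hx' hx⟩
  choose t ht using hscale
  have hh : 0 < ENNReal.ofReal (2 + |h|) := ENNReal.ofReal_pos.2 (by positivity)
  have hmem : ∀ x ∈ E, x ∈ ball (x - t x * h) ((2 + |h|) * t x) := fun x hx => by
    rw [mem_ball, Real.dist_eq, sub_sub_cancel, abs_mul, abs_of_pos (ht x hx).1]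
    nlinarith [abs_nonneg h, (ht x hx).1]
  have hmass : ∀ x ∈ E, L / ENNReal.ofReal (2 + |h|) * ENNReal.ofReal ((2 + |h|) * t x) ≤
      ρ (ball (x - t x * h) ((2 + |h|) * t x)) := fun x hx => by
    calc L / ENNReal.ofReal (2 + |h|) * ENNReal.ofReal ((2 + |h|) * t x)
        = L * ENNReal.ofReal (t x) := by
          rw [ENNReal.ofReal_mul (by positivity), ← mul_assoc,
            ENNReal.div_mul_cancel hh.ne' ENNReal.ofReal_ne_top]
      _ ≤ ρ (ball (x - t x * h) (2 * t x)) := (ht x hx).2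
      _ ≤ ρ (ball (x - t x * h) ((2 + |h|) * t x)) :=
          measure_mono (ball_subset_ball (by nlinarith [abs_nonneg h, (ht x hx).1]))
  have hcover := mul_volume_le_of_le_measure_ball ρ hmem hmass
  rw [withDensity_apply _ MeasurableSet.univ, Measure.restrict_univ] at hcover
  calc L * volume E
      = ENNReal.ofReal (2 + |h|) * (L / ENNReal.ofReal (2 + |h|) * volume E) := by
        rw [← mul_assoc, ENNReal.mul_div_cancel hh.ne' ENNReal.ofReal_ne_top]
    _ ≤ 8 * ENNReal.ofReal (2 + |h|) * ∫⁻ u, ENNReal.ofReal |f u| := by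
        rw [mul_comm 8, mul_assoc]
        gcongr

theorem ofReal_mul_volume_lt_MhStar_le {f : ℝ → ℝ} (hf : Measurable f) (h : ℝ) {t : ℝ}
    (ht : 0 < t) :
    ENNReal.ofReal t * volume {x | ENNReal.ofReal t < MhStar h f x} ≤
      16 * ENNReal.ofReal (2 + |h|) * ∫⁻ u in {u | t < 8 * |f u|}, ENNReal.ofReal |f u| := by
  set S := {u | t < 8 * |f u|}
  have hS : MeasurableSet S := measurableSet_lt measurable_const (by fun_prop)
  have hsplit : ∀ u, |f u| ≤ |Sᶜ.indicator f u| + |S.indicator f u| := fun u => by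
    by_cases hu : u ∈ S <;> simp [hu]
  have hsmall : ∀ x, MhStar h (Sᶜ.indicator f) x ≤ ENNReal.ofReal (t / 2) := fun x => by
    have hnorm : eLpNorm (Sᶜ.indicator f) ∞ volume ≤ ENNReal.ofReal (t / 8) := by
      rw [eLpNorm_exponent_top]
      refine eLpNormEssSup_le_of_ae_bound (ae_of_all _ fun u => ?_)
      by_cases hu : u ∈ S
      · simp only [indicator_of_notMem (notMem_compl_iff.2 hu), norm_zero]
        positivity
      · rw [indicator_of_mem (mem_compl hu), Real.norm_eq_abs]
        linarith [not_lt.1 (show ¬ t < 8 * |f u| from hu)]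
    calc MhStar h (Sᶜ.indicator f) x ≤ 4 * ENNReal.ofReal (t / 8) :=
          (MhStar_le_eLpNorm_top h _ x).trans (mul_le_mul_right hnorm _)
      _ = ENNReal.ofReal (t / 2) := by
          rw [← ENNReal.ofReal_ofNat 4, ← ENNReal.ofReal_mul (by norm_num)]
          ring_nf
  have hsub : {x | ENNReal.ofReal t < MhStar h f x} ⊆
      {x | ENNReal.ofReal (t / 2) < MhStar h (S.indicator f) x} := fun x hx => by
    by_contra hlarge
    simp only [mem_ofPred_eq, not_lt] at hx hlarge
    refine hx.not_ge ((MhStar_le_add ((hf.indicator hS.compl)) hsplit x).trans ?_)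
    calc MhStar h (Sᶜ.indicator f) x + MhStar h (S.indicator f) x
        ≤ ENNReal.ofReal (t / 2) + ENNReal.ofReal (t / 2) := add_le_add (hsmall x) hlarge
      _ = ENNReal.ofReal t := by
          rw [← ENNReal.ofReal_add (by positivity) (by positivity), add_halves]
  have hbig : ∫⁻ u, ENNReal.ofReal |S.indicator f u| = ∫⁻ u in S, ENNReal.ofReal |f u| := by
    rw [← lintegral_indicator hS]
    refine lintegral_congr fun u => ?_
    by_cases hu : u ∈ S <;> simp [hu]
  calc ENNReal.ofReal t * volume {x | ENNReal.ofReal t < MhStar h f x}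
      ≤ 2 * (ENNReal.ofReal (t / 2) *
          volume {x | ENNReal.ofReal (t / 2) < MhStar h (S.indicator f) x}) := by
        rw [← mul_assoc, ← ENNReal.ofReal_ofNat 2, ← ENNReal.ofReal_mul (by norm_num),
          mul_div_cancel₀ _ two_ne_zero]
        exact mul_le_mul_right (measure_mono hsub) _
    _ ≤ 2 * (8 * ENNReal.ofReal (2 + |h|) * ∫⁻ u, ENNReal.ofReal |S.indicator f u|) :=
        mul_le_mul_right (mul_volume_lt_MhStar_le h _ _) _
    _ = 16 * ENNReal.ofReal (2 + |h|) * ∫⁻ u in S, ENNReal.ofReal |f u| := by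
        rw [hbig]
        ring

theorem lintegral_MhStar_rpow_le {f : ℝ → ℝ} (hf : Measurable f) (h : ℝ) {P : ℝ}
    (hP : 1 < P) :
    ∫⁻ x, MhStar h f x ^ P ≤ ENNReal.ofReal (P / (P - 1) * 8 ^ (P - 1)) *
      (16 * ENNReal.ofReal (2 + |h|)) * ∫⁻ u, ENNReal.ofReal |f u| ^ P :=
  lintegral_rpow_le_of_mul_meas_lt_le volume volume (measurable_MhStar h f) hf hP (by norm_num)
    (ENNReal.mul_ne_top (by norm_num) ENNReal.ofReal_ne_top)
    fun _ ht => ofReal_mul_volume_lt_MhStar_le hf h ht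

lemma lpNormE_top_MhStar_le (h : ℝ) (f : ℝ → ℝ) :
    lpNormE volume (MhStar h f) ∞ ≤ 4 * eLpNorm f ∞ volume := by
  rw [lpNormE, if_neg ENNReal.top_ne_zero, if_pos rfl]
  exact essSup_le_of_ae_le _ (ae_of_all _ (MhStar_le_eLpNorm_top h f))

lemma lpNormE_MhStar_le {f : ℝ → ℝ} (hf : Measurable f) (h : ℝ) {p : ℝ≥0∞} (hp : 1 < p)
    (hp_top : p ≠ ∞) :
    lpNormE volume (MhStar h f) p ≤
      ENNReal.ofReal ((32 * (p.toReal / (p.toReal - 1)) * 8 ^ (p.toReal - 1)) ^ (1 / p.toReal)) *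
        ENNReal.ofReal ((1 + |h|) ^ (1 / p).toReal) * eLpNorm f p volume := by
  set P := p.toReal
  have hP : 1 < P := by
    simpa using (ENNReal.toReal_lt_toReal ENNReal.one_ne_top hp_top).2 hp
  have hP0 : 0 ≤ 1 / P := by positivity
  have hA : 0 ≤ P / (P - 1) * 8 ^ (P - 1) :=
    mul_nonneg (div_nonneg (by linarith) (by linarith)) (by positivity)
  have hbound : ∫⁻ x, MhStar h f x ^ P ≤ ENNReal.ofReal (32 * (P / (P - 1)) * 8 ^ (P - 1)) *
      ENNReal.ofReal (1 + |h|) * ∫⁻ u, ENNReal.ofReal |f u| ^ P := by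
    refine (lintegral_MhStar_rpow_le hf h hP).trans (mul_le_mul_left ?_ _)
    rw [← ENNReal.ofReal_ofNat 16, ← ENNReal.ofReal_mul (by norm_num), ← ENNReal.ofReal_mul hA,
      ← ENNReal.ofReal_mul (by positivity)]
    exact ENNReal.ofReal_le_ofReal (by nlinarith [abs_nonneg h])
  rw [lpNormE, if_neg (zero_lt_one.trans hp).ne', if_neg hp_top,
    eLpNorm_eq_lintegral_rpow_enorm_toReal (zero_lt_one.trans hp).ne' hp_top,
    ENNReal.toReal_div, ENNReal.toReal_one]
  calc (∫⁻ x, MhStar h f x ^ P) ^ (1 / P)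
      ≤ (ENNReal.ofReal (32 * (P / (P - 1)) * 8 ^ (P - 1)) *
          ENNReal.ofReal (1 + |h|) * ∫⁻ u, ENNReal.ofReal |f u| ^ P) ^ (1 / P) :=
        ENNReal.rpow_le_rpow hbound hP0
    _ = _ := by
        simp only [ENNReal.mul_rpow_of_nonneg _ _ hP0, Real.enorm_eq_ofReal_abs]
        rw [ENNReal.ofReal_rpow_of_nonneg (by rw [mul_assoc]; positivity) hP0,
          ENNReal.ofReal_rpow_of_nonneg (by positivity) hP0]

/-- Lemma 3.2: `‖M_h^* f‖_{L^p} ≤ C (1+|h|)^{1/p} ‖f‖_{L^p}` for `1 < p ≤ ∞`,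
with `C` independent of `h`. -/
theorem MhStar_Lp_bound (p : ℝ≥0∞) (hp : 1 < p) :
    ∃ C : ℝ≥0, ∀ (h : ℝ) (f : ℝ → ℝ), MemLp f p volume →
      lpNormE volume (MhStar h f) p ≤
        (C : ℝ≥0∞) * ENNReal.ofReal ((1 + |h|) ^ (1 / p).toReal) * eLpNorm f p volume := by
  rcases eq_or_ne p ∞ with rfl | hp_top
  · refine ⟨4, fun h f _ => ?_⟩
    simpa using lpNormE_top_MhStar_le h f
  refine ⟨((32 * (p.toReal / (p.toReal - 1)) * 8 ^ (p.toReal - 1)) ^ (1 / p.toReal)).toNNReal,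
    fun h f hf => ?_⟩
  have hae := hf.aestronglyMeasurable.aemeasurable.ae_eq_mk
  rw [MhStar_congr_ae hae, eLpNorm_congr_ae hae]
  exact lpNormE_MhStar_le hf.aestronglyMeasurable.aemeasurable.measurable_mk h hp hp_top
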